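/- Let h > 0 and let (u_n)_{n ≥ 0} be a sequence of real numbers each equal to 0 or h, with u₀ = 0, not identically 0. For j, j' ∈ {0, h}, let N_{jj'}(N) be the number of indices 0 ≤ i < N with u_i = j and u_{i+1} = j', and assume the frequencies F₀₀, F_hh, F₀h, F_h0 exist, i.e., N_{jj'}(N)/N → F_{jj'} as N → ∞ for each pair. For each N let ℐ(Γ_N) = 2ℓ(Γ_N)/δ(Γ_N) be the inconstancy of the polygonal curve Γ_N through (0,u₀), …, (N,u_N). Then ℐ(Γ_N) converges as N → ∞, and the inconstancy of the sequence satisfies ℐ((u_n)) = F₀₀ + F_hh + √(1 + h²)(F₀h + F_h0) = 1 + (√(1 + h²) − 1)(F₀h + F_h0). -/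

import Mathlib

noncomputable section
open MeasureTheory Real Set Filter
open scoped ENNReal

/-- The point `(x, y)` of the Euclidean plane. -/
def pt (x y : ℝ) : EuclideanSpace ℝ (Fin 2) := WithLp.toLp 2 ![x, y]

/-- The polygonal curve `Γ_N` through `(0,u₀), (1,u₁), …, (N,u_N)`: the union of the
segments joining `(i, u_i)` to `(i+1, u_{i+1})` for `i = 0, …, N−1`. -/
def polyCurve (u : ℕ → ℝ) (N : ℕ) : Set (EuclideanSpace ℝ (Fin 2)) :=
  ⋃ i ∈ Finset.range N, segment ℝ (pt i (u i)) (pt (i + 1) (u (i + 1)))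

/-- The length `ℓ(Γ_N) = Σ_{i<N} √(1 + (u_{i+1} − u_i)²)` of the polygonal curve. -/
def polyLength (u : ℕ → ℝ) (N : ℕ) : ℝ :=
  ∑ i ∈ Finset.range N, Real.sqrt (1 + (u (i + 1) - u i) ^ 2)

/-- The perimeter `δ(Γ_N)` of the convex hull of the polygonal curve: the
one-dimensional Hausdorff measure of the frontier of the convex hull. -/
def polyDelta (u : ℕ → ℝ) (N : ℕ) : ℝ :=
  (μH[1] (frontier (convexHull ℝ (polyCurve u N)))).toReal

/-- The inconstancy `ℐ(Γ_N) := 2 ℓ(Γ_N) / δ(Γ_N)` of the polygonal curve. -/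
def polyIncon (u : ℕ → ℝ) (N : ℕ) : ℝ :=
  2 * polyLength u N / polyDelta u N

/-- The number of indices `0 ≤ i < N` with `u_i = j` and `u_{i+1} = j'`. -/
def blockCount (u : ℕ → ℝ) (N : ℕ) (j j' : ℝ) : ℕ :=
  ((Finset.range N).filter fun i => u i = j ∧ u (i + 1) = j').card

/-!
Each step of `Γ_N` has length `1` (flat) or `√(1 + h²)` (jump), so `ℓ(Γ_N)/N` converges to
`F₀₀ + F_hh + √(1 + h²)(F₀h + F_h0)`, and the four frequencies add up to `1`.

The convex hull of `Γ_N` is a compact convex set in the box `[0, N] × [0, h]` meeting every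
vertical line over `[0, N]`, with nonempty interior once `u` has taken the value `h`. Its frontier
is covered by the graphs of its concave upper and convex lower profile and two vertical sides. A
graph that is monotone on either side of one point, of width `w` and height at most `h`, has
length at most `w + 2h`; over `[1, N - 1]` the two profiles are disjoint graphs, each of length
at least `N - 2` by projection. Hence `|δ(Γ_N) - 2N| ≤ 4 + 6h` and `δ(Γ_N)/N → 2`.
-/

local notation "ℝ²" => EuclideanSpace ℝ (Fin 2)

abbrev graphOver (f : ℝ → ℝ) (s : Set ℝ) : Set ℝ² := (fun x => pt x (f x)) '' s

@[simp] lemma pt_apply_zero (x y : ℝ) : pt x y 0 = x := rfl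

@[simp] lemma pt_apply_one (x y : ℝ) : pt x y 1 = y := rfl

lemma pt_eta (p : ℝ²) : pt (p 0) (p 1) = p := by
  ext i; fin_cases i <;> rfl

lemma smul_pt_add_smul_pt (c d x y x' y' : ℝ) :
    c • pt x y + d • pt x' y' = pt (c * x + d * x') (c * y + d * y') := by
  ext i; fin_cases i <;> simp [pt]

lemma dist_pt (x y x' y' : ℝ) :
    dist (pt x y) (pt x' y') = √((x - x') ^ 2 + (y - y') ^ 2) := by
  simp [EuclideanSpace.dist_eq, pt, Fin.sum_univ_two, Real.dist_eq, sq_abs]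

lemma dist_pt_le_of_mul_nonneg {x y x' y' : ℝ} (h : 0 ≤ (x - x') * (y - y')) :
    dist (pt x y) (pt x' y') ≤ |x + y - (x' + y')| := by
  rw [dist_pt, ← Real.sqrt_sq_eq_abs]
  exact Real.sqrt_le_sqrt (by nlinarith)

lemma dist_pt_le_of_mul_nonpos {x y x' y' : ℝ} (h : (x - x') * (y - y') ≤ 0) :
    dist (pt x y) (pt x' y') ≤ |x - y - (x' - y')| := by
  rw [dist_pt, ← Real.sqrt_sq_eq_abs]
  exact Real.sqrt_le_sqrt (by nlinarith)

lemma isometry_pt (x : ℝ) : Isometry (pt x) :=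
  Isometry.of_dist_eq fun y y' => by simp [dist_pt, Real.dist_eq, Real.sqrt_sq_eq_abs]

lemma continuous_pt : Continuous fun q : ℝ × ℝ => pt q.1 q.2 := by
  unfold pt; fun_prop

lemma lipschitzWith_apply (i : Fin 2) : LipschitzWith 1 fun p : ℝ² => p i :=
  LipschitzWith.mk_one fun p q => by simpa using PiLp.dist_apply_le p q i

lemma hausdorffMeasure_le_of_dist_le {X Y : Type*} [MetricSpace X] [MeasurableSpace X]
    [BorelSpace X] [MetricSpace Y] [MeasurableSpace Y] [BorelSpace Y] {d : ℝ} (hd : 0 ≤ d)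
    {s : Set X} {g : X → Y} (h : ∀ p ∈ s, ∀ q ∈ s, dist p q ≤ dist (g p) (g q)) :
    μH[d] s ≤ μH[d] (g '' s) := by
  rcases s.eq_empty_or_nonempty with rfl | ⟨p₀, -⟩
  · simp
  have : Nonempty X := ⟨p₀⟩
  have hinj : InjOn g s := fun p hp q hq hpq =>
    dist_le_zero.1 (by simpa [hpq] using h p hp q hq)
  have hleft := hinj.leftInvOn_invFunOn
  have hlip : LipschitzOnWith 1 (Function.invFunOn g s) (g '' s) := by
    refine LipschitzOnWith.mk_one ?_
    rintro _ ⟨p, hp, rfl⟩ _ ⟨q, hq, rfl⟩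
    simpa [hleft hp, hleft hq] using h p hp q hq
  calc μH[d] s = μH[d] (Function.invFunOn g s '' (g '' s)) := by rw [hleft.image_image]
    _ ≤ μH[d] (g '' s) := by simpa using hlip.hausdorffMeasure_image_le hd

lemma hausdorffMeasure_graphOver_le_of_monotoneOn_or_antitoneOn {f : ℝ → ℝ} {s : Set ℝ}
    {c d c' d' : ℝ} (hs : s ⊆ Icc c d) (hf : MapsTo f s (Icc c' d'))
    (hmono : MonotoneOn f s ∨ AntitoneOn f s) :
    μH[1] (graphOver f s) ≤ ENNReal.ofReal (d - c + (d' - c')) := by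
  obtain ⟨g, e, hdist, himg⟩ : ∃ (g : ℝ² → ℝ) (e : ℝ),
      (∀ p ∈ graphOver f s, ∀ q ∈ graphOver f s, dist p q ≤ dist (g p) (g q)) ∧
      g '' graphOver f s ⊆ Icc e (e + (d - c + (d' - c'))) := by
    -- along a monotone (antitone) graph, `x + y` (`x - y`) does not decrease distances
    rcases hmono with hmono | hanti
    · refine ⟨fun p => p 0 + p 1, c + c', ?_, ?_⟩
      · rintro _ ⟨x, hx, rfl⟩ _ ⟨x', hx', rfl⟩
        refine dist_pt_le_of_mul_nonneg ?_
        rcases le_total x x' with hxx | hxx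
        · exact mul_nonneg_of_nonpos_of_nonpos (by linarith) (by linarith [hmono hx hx' hxx])
        · exact mul_nonneg (by linarith) (by linarith [hmono hx' hx hxx])
      · rintro _ ⟨_, ⟨x, hx, rfl⟩, rfl⟩
        have := hs hx; have := hf hx
        simp only [pt_apply_zero, pt_apply_one, mem_Icc] at *
        constructor <;> linarith
    · refine ⟨fun p => p 0 - p 1, c - d', ?_, ?_⟩
      · rintro _ ⟨x, hx, rfl⟩ _ ⟨x', hx', rfl⟩
        refine dist_pt_le_of_mul_nonpos ?_
        rcases le_total x x' with hxx | hxx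
        · exact mul_nonpos_of_nonpos_of_nonneg (by linarith) (by linarith [hanti hx hx' hxx])
        · exact mul_nonpos_of_nonneg_of_nonpos (by linarith) (by linarith [hanti hx' hx hxx])
      · rintro _ ⟨_, ⟨x, hx, rfl⟩, rfl⟩
        have := hs hx; have := hf hx
        simp only [pt_apply_zero, pt_apply_one, mem_Icc] at *
        constructor <;> linarith
  calc μH[1] (graphOver f s)
      ≤ μH[1] (g '' (graphOver f s)) := hausdorffMeasure_le_of_dist_le zero_le_one hdist
    _ ≤ μH[1] (Icc e (e + (d - c + (d' - c')))) := measure_mono himg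
    _ = ENNReal.ofReal (d - c + (d' - c')) := by simp [hausdorffMeasure_real]

lemma ofReal_le_hausdorffMeasure_graphOver (f : ℝ → ℝ) (c d : ℝ) :
    ENNReal.ofReal (d - c) ≤ μH[1] (graphOver f (Icc c d)) := by
  have h := (lipschitzWith_apply 0).hausdorffMeasure_image_le zero_le_one
    (graphOver f (Icc c d))
  rw [image_image] at h
  simpa [hausdorffMeasure_real] using h

section Unimodal

variable {f : ℝ → ℝ} {s : Set ℝ} {m : ℝ}

lemma ConcaveOn.monotoneOn_of_isMaxOn (hf : ConcaveOn ℝ s f) (hm : m ∈ s)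
    (hmax : IsMaxOn f s m) : MonotoneOn f (s ∩ Iic m) := by
  intro x hx x' hx' hxx'
  rcases hxx'.eq_or_lt with rfl | hlt
  · rfl
  rcases (mem_Iic.1 hx'.2).eq_or_lt with rfl | hlt'
  · exact hmax hx.1
  have hseg : x' ∈ openSegment ℝ x m := by
    rw [openSegment_eq_Ioo (hlt.trans hlt')]; exact ⟨hlt, hlt'⟩
  exact hf.left_le_of_le_right hx.1 hm hseg (hmax hx'.1)

lemma ConcaveOn.antitoneOn_of_isMaxOn (hf : ConcaveOn ℝ s f) (hm : m ∈ s)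
    (hmax : IsMaxOn f s m) : AntitoneOn f (s ∩ Ici m) := by
  intro x hx x' hx' hxx'
  rcases hxx'.eq_or_lt with rfl | hlt
  · rfl
  rcases (mem_Ici.1 hx.2).eq_or_lt with rfl | hlt'
  · exact hmax hx'.1
  have hseg : x ∈ openSegment ℝ m x' := by
    rw [openSegment_eq_Ioo (hlt'.trans hlt)]; exact ⟨hlt', hlt⟩
  exact hf.right_le_of_le_left hm hx'.1 hseg (hmax hx.1)

lemma ConvexOn.antitoneOn_of_isMinOn (hf : ConvexOn ℝ s f) (hm : m ∈ s)
    (hmin : IsMinOn f s m) : AntitoneOn f (s ∩ Iic m) := by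
  simpa using (hf.neg.monotoneOn_of_isMaxOn hm hmin.neg).neg

lemma ConvexOn.monotoneOn_of_isMinOn (hf : ConvexOn ℝ s f) (hm : m ∈ s)
    (hmin : IsMinOn f s m) : MonotoneOn f (s ∩ Ici m) := by
  simpa using (hf.neg.antitoneOn_of_isMaxOn hm hmin.neg).neg

end Unimodal

lemma ConcaveOn.pos_of_mem_Ioo {φ : ℝ → ℝ} {a x₀ x : ℝ} (hφ : ConcaveOn ℝ (Icc 0 a) φ)
    (h0 : 0 ≤ φ 0) (ha : 0 ≤ φ a) (hx₀ : x₀ ∈ Icc 0 a) (hpos : 0 < φ x₀) (hx : x ∈ Ioo 0 a) :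
    0 < φ x := by
  by_contra! hle
  have h0a : (0 : ℝ) ∈ Icc 0 a := ⟨le_rfl, hx₀.1.trans hx₀.2⟩
  have haa : a ∈ Icc 0 a := ⟨h0a.2, le_rfl⟩
  rcases lt_trichotomy x x₀ with hlt | rfl | hgt
  · have hseg : x ∈ openSegment ℝ 0 x₀ := by
      rw [openSegment_eq_Ioo (hx.1.trans hlt)]; exact ⟨hx.1, hlt⟩
    linarith [hφ.left_lt_of_lt_right h0a hx₀ hseg (by linarith)]
  · linarith
  · have hseg : x ∈ openSegment ℝ x₀ a := by
      rw [openSegment_eq_Ioo (hgt.trans hx.2)]; exact ⟨hgt, hx.2⟩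
    linarith [hφ.lt_right_of_left_lt hx₀ haa hseg (by linarith)]

lemma hausdorffMeasure_graphOver_le_of_piecewise_monotoneOn {f : ℝ → ℝ} {a b m : ℝ}
    (hm : m ∈ Icc 0 a) (hf : MapsTo f (Icc 0 a) (Icc 0 b))
    (hleft : MonotoneOn f (Icc 0 a ∩ Iic m) ∨ AntitoneOn f (Icc 0 a ∩ Iic m))
    (hright : MonotoneOn f (Icc 0 a ∩ Ici m) ∨ AntitoneOn f (Icc 0 a ∩ Ici m)) :
    μH[1] (graphOver f (Icc 0 a)) ≤ ENNReal.ofReal (a + 2 * b) := by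
  have hsplit : Icc 0 a = (Icc 0 a ∩ Iic m) ∪ (Icc 0 a ∩ Ici m) := by
    rw [← inter_union_distrib_left, Iic_union_Ici, inter_univ]
  have hb : 0 ≤ b := (hf ⟨le_rfl, hm.1.trans hm.2⟩).1.trans (hf ⟨le_rfl, hm.1.trans hm.2⟩).2
  calc μH[1] (graphOver f (Icc 0 a))
      ≤ μH[1] (graphOver f (Icc 0 a ∩ Iic m))
        + μH[1] (graphOver f (Icc 0 a ∩ Ici m)) := by
        conv_lhs => rw [hsplit, graphOver, image_union]
        exact measure_union_le _ _
    _ ≤ ENNReal.ofReal (m - 0 + (b - 0)) + ENNReal.ofReal (a - m + (b - 0)) :=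
        add_le_add
          (hausdorffMeasure_graphOver_le_of_monotoneOn_or_antitoneOn (fun x hx => ⟨hx.1.1, hx.2⟩)
            (hf.mono_left inter_subset_left) hleft)
          (hausdorffMeasure_graphOver_le_of_monotoneOn_or_antitoneOn (fun x hx => ⟨hx.2, hx.1.2⟩)
            (hf.mono_left inter_subset_left) hright)
    _ = ENNReal.ofReal (a + 2 * b) := by
        rw [← ENNReal.ofReal_add (by linarith [hm.1]) (by linarith [hm.2])]
        ring_nf

lemma exists_pt_add_mem_of_mem_interior {K : Set ℝ²} {x y : ℝ} (h : pt x y ∈ interior K) :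
    ∃ ε > 0, pt x (y + ε) ∈ K ∧ pt x (y - ε) ∈ K := by
  obtain ⟨ε, hε, hball⟩ := Metric.isOpen_iff.1 isOpen_interior _ h
  have hshift : ∀ t, |t| < ε → pt x (y + t) ∈ K := fun t ht => by
    refine interior_subset (hball ?_)
    rw [Metric.mem_ball, (isometry_pt x).dist_eq, Real.dist_eq]
    simpa using ht
  have hhalf : |ε / 2| < ε := by rw [abs_of_pos (by positivity)]; linarith
  exact ⟨ε / 2, by positivity, hshift _ hhalf,
    by simpa [sub_eq_add_neg] using hshift (-(ε / 2)) (by rwa [abs_neg])⟩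

structure IsBoxedConvexBody (K : Set ℝ²) (a b : ℝ) : Prop where
  convex : Convex ℝ K
  isCompact : IsCompact K
  mem_box : ∀ p ∈ K, p 0 ∈ Icc 0 a ∧ p 1 ∈ Icc 0 b
  exists_pt_mem : ∀ x ∈ Icc 0 a, ∃ y, pt x y ∈ K
  nonneg : 0 ≤ a

def upperProfile (K : Set ℝ²) (x : ℝ) : ℝ := sSup {y | pt x y ∈ K}

def lowerProfile (K : Set ℝ²) (x : ℝ) : ℝ := sInf {y | pt x y ∈ K}

namespace IsBoxedConvexBody

variable {K : Set ℝ²} {a b x y : ℝ}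

lemma mem_Icc_of_pt_mem (hK : IsBoxedConvexBody K a b) (h : pt x y ∈ K) :
    x ∈ Icc 0 a ∧ y ∈ Icc 0 b :=
  hK.mem_box _ h

lemma nonneg_height (hK : IsBoxedConvexBody K a b) : 0 ≤ b := by
  obtain ⟨y, hy⟩ := hK.exists_pt_mem 0 ⟨le_rfl, hK.nonneg⟩
  exact (hK.mem_Icc_of_pt_mem hy).2.1.trans (hK.mem_Icc_of_pt_mem hy).2.2

lemma isCompact_slice (hK : IsBoxedConvexBody K a b) (x : ℝ) : IsCompact {y | pt x y ∈ K} :=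
  isCompact_Icc.of_isClosed_subset (hK.isCompact.isClosed.preimage (isometry_pt x).continuous)
    fun _ hy => (hK.mem_Icc_of_pt_mem hy).2

lemma upperProfile_mem (hK : IsBoxedConvexBody K a b) (hx : x ∈ Icc 0 a) :
    pt x (upperProfile K x) ∈ K :=
  (hK.isCompact_slice x).sSup_mem (hK.exists_pt_mem x hx)

lemma lowerProfile_mem (hK : IsBoxedConvexBody K a b) (hx : x ∈ Icc 0 a) :
    pt x (lowerProfile K x) ∈ K :=
  (hK.isCompact_slice x).sInf_mem (hK.exists_pt_mem x hx)

lemma le_upperProfile (hK : IsBoxedConvexBody K a b) (h : pt x y ∈ K) : y ≤ upperProfile K x :=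
  le_csSup (hK.isCompact_slice x).bddAbove h

lemma lowerProfile_le (hK : IsBoxedConvexBody K a b) (h : pt x y ∈ K) : lowerProfile K x ≤ y :=
  csInf_le (hK.isCompact_slice x).bddBelow h

lemma mapsTo_upperProfile (hK : IsBoxedConvexBody K a b) :
    MapsTo (upperProfile K) (Icc 0 a) (Icc 0 b) :=
  fun _ hx => (hK.mem_Icc_of_pt_mem (hK.upperProfile_mem hx)).2

lemma mapsTo_lowerProfile (hK : IsBoxedConvexBody K a b) :
    MapsTo (lowerProfile K) (Icc 0 a) (Icc 0 b) :=
  fun _ hx => (hK.mem_Icc_of_pt_mem (hK.lowerProfile_mem hx)).2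

lemma concaveOn_upperProfile (hK : IsBoxedConvexBody K a b) :
    ConcaveOn ℝ (Icc 0 a) (upperProfile K) := by
  refine ⟨convex_Icc 0 a, fun x hx x' hx' c d hc hd hcd => hK.le_upperProfile ?_⟩
  simpa only [smul_pt_add_smul_pt, smul_eq_mul] using
    hK.convex (hK.upperProfile_mem hx) (hK.upperProfile_mem hx') hc hd hcd

lemma convexOn_lowerProfile (hK : IsBoxedConvexBody K a b) :
    ConvexOn ℝ (Icc 0 a) (lowerProfile K) := by
  refine ⟨convex_Icc 0 a, fun x hx x' hx' c d hc hd hcd => hK.lowerProfile_le ?_⟩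
  simpa only [smul_pt_add_smul_pt, smul_eq_mul] using
    hK.convex (hK.lowerProfile_mem hx) (hK.lowerProfile_mem hx') hc hd hcd

lemma continuousOn_upperProfile (hK : IsBoxedConvexBody K a b) :
    ContinuousOn (upperProfile K) (Ioo 0 a) := by
  simpa using hK.concaveOn_upperProfile.continuousOn_interior

lemma continuousOn_lowerProfile (hK : IsBoxedConvexBody K a b) :
    ContinuousOn (lowerProfile K) (Ioo 0 a) := by
  simpa using hK.convexOn_lowerProfile.continuousOn_interior

lemma pt_mem_of_mem_Icc (hK : IsBoxedConvexBody K a b) (hx : x ∈ Icc 0 a)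
    (hy : y ∈ Icc (lowerProfile K x) (upperProfile K x)) : pt x y ∈ K := by
  have hslice : Convex ℝ {y | pt x y ∈ K} := fun y hy y' hy' c d hc hd hcd => by
    show pt x _ ∈ K
    simpa only [smul_pt_add_smul_pt, smul_eq_mul, ← add_mul, hcd, one_mul] using
      hK.convex hy hy' hc hd hcd
  exact hslice.ordConnected.out (hK.lowerProfile_mem hx) (hK.upperProfile_mem hx) hy

lemma pt_mem_interior (hK : IsBoxedConvexBody K a b) (hx : x ∈ Ioo 0 a)
    (hlow : lowerProfile K x < y) (hup : y < upperProfile K x) : pt x y ∈ interior K := by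
  set U := {p : ℝ² | p 0 ∈ Ioo 0 a}
  set gap : ℝ² → ℝ := fun p => min (upperProfile K (p 0) - p 1) (p 1 - lowerProfile K (p 0))
  have hU : IsOpen U := isOpen_Ioo.preimage (lipschitzWith_apply 0).continuous
  have hgap : ContinuousOn gap U := by
    have h0 : MapsTo (fun p : ℝ² => p 0) U (Ioo 0 a) := fun _ hp => hp
    have hc0 := (lipschitzWith_apply 0).continuous.continuousOn (s := U)
    have hc1 := (lipschitzWith_apply 1).continuous.continuousOn (s := U)
    exact ContinuousOn.inf ((hK.continuousOn_upperProfile.comp hc0 h0).sub hc1)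
      (hc1.sub (hK.continuousOn_lowerProfile.comp hc0 h0))
  refine interior_maximal (t := U ∩ gap ⁻¹' Ioi 0) ?_ (hgap.isOpen_inter_preimage hU isOpen_Ioi)
    ⟨hx, by simp [gap, hlow, hup]⟩
  rintro p ⟨hp, hpgap⟩
  rw [← pt_eta p]
  simp only [gap, mem_preimage, mem_Ioi, lt_min_iff, sub_pos] at hpgap
  exact hK.pt_mem_of_mem_Icc (Ioo_subset_Icc_self hp) ⟨hpgap.2.le, hpgap.1.le⟩

lemma frontier_subset (hK : IsBoxedConvexBody K a b) :
    frontier K ⊆ graphOver (upperProfile K) (Icc 0 a)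
      ∪ graphOver (lowerProfile K) (Icc 0 a) ∪ pt 0 '' Icc 0 b ∪ pt a '' Icc 0 b := by
  rintro p ⟨hpK, hpint⟩
  rw [hK.isCompact.isClosed.closure_eq] at hpK
  rw [← pt_eta p] at hpK hpint ⊢
  obtain ⟨hx, hy⟩ := hK.mem_Icc_of_pt_mem hpK
  rcases hx.1.eq_or_lt with h0 | h0
  · exact Or.inl (Or.inr ⟨p 1, hy, by rw [h0]⟩)
  rcases hx.2.eq_or_lt with ha | ha
  · exact Or.inr ⟨p 1, hy, by rw [ha]⟩
  rcases (hK.le_upperProfile hpK).eq_or_lt with hup | hup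
  · exact Or.inl (Or.inl (Or.inl ⟨p 0, hx, congrArg (pt (p 0)) hup.symm⟩))
  rcases (hK.lowerProfile_le hpK).eq_or_lt with hlow | hlow
  · exact Or.inl (Or.inl (Or.inr ⟨p 0, hx, congrArg (pt (p 0)) hlow⟩))
  exact absurd (hK.pt_mem_interior ⟨h0, ha⟩ hlow hup) hpint

lemma exists_isMaxOn_upperProfile (hK : IsBoxedConvexBody K a b) :
    ∃ m ∈ Icc 0 a, IsMaxOn (upperProfile K) (Icc 0 a) m := by
  obtain ⟨y, hy⟩ := hK.exists_pt_mem 0 ⟨le_rfl, hK.nonneg⟩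
  obtain ⟨q, hq, hmax⟩ := hK.isCompact.exists_isMaxOn ⟨_, hy⟩
    (lipschitzWith_apply 1).continuous.continuousOn
  refine ⟨q 0, (hK.mem_box q hq).1, fun x hx => ?_⟩
  have hq' : pt (q 0) (q 1) ∈ K := by rwa [pt_eta]
  exact (hmax (hK.upperProfile_mem hx)).trans (hK.le_upperProfile hq')

lemma exists_isMinOn_lowerProfile (hK : IsBoxedConvexBody K a b) :
    ∃ m ∈ Icc 0 a, IsMinOn (lowerProfile K) (Icc 0 a) m := by
  obtain ⟨y, hy⟩ := hK.exists_pt_mem 0 ⟨le_rfl, hK.nonneg⟩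
  obtain ⟨q, hq, hmin⟩ := hK.isCompact.exists_isMinOn ⟨_, hy⟩
    (lipschitzWith_apply 1).continuous.continuousOn
  refine ⟨q 0, (hK.mem_box q hq).1, fun x hx => ?_⟩
  have hq' : pt (q 0) (q 1) ∈ K := by rwa [pt_eta]
  exact (hK.lowerProfile_le hq').trans (hmin (hK.lowerProfile_mem hx))

lemma hausdorffMeasure_frontier_le (hK : IsBoxedConvexBody K a b) :
    μH[1] (frontier K) ≤ ENNReal.ofReal (2 * a + 6 * b) := by
  obtain ⟨m, hm, hmax⟩ := hK.exists_isMaxOn_upperProfile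
  obtain ⟨m', hm', hmin⟩ := hK.exists_isMinOn_lowerProfile
  have hup := hausdorffMeasure_graphOver_le_of_piecewise_monotoneOn hm hK.mapsTo_upperProfile
    (.inl (hK.concaveOn_upperProfile.monotoneOn_of_isMaxOn hm hmax))
    (.inr (hK.concaveOn_upperProfile.antitoneOn_of_isMaxOn hm hmax))
  have hlow := hausdorffMeasure_graphOver_le_of_piecewise_monotoneOn hm' hK.mapsTo_lowerProfile
    (.inr (hK.convexOn_lowerProfile.antitoneOn_of_isMinOn hm' hmin))
    (.inl (hK.convexOn_lowerProfile.monotoneOn_of_isMinOn hm' hmin))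
  have hside : ∀ x, μH[1] (pt x '' Icc 0 b) = ENNReal.ofReal b := fun x => by
    rw [(isometry_pt x).hausdorffMeasure_image (.inl zero_le_one), hausdorffMeasure_real,
      Real.volume_Icc, sub_zero]
  have hb := hK.nonneg_height
  calc μH[1] (frontier K)
      ≤ μH[1] (graphOver (upperProfile K) (Icc 0 a))
        + μH[1] (graphOver (lowerProfile K) (Icc 0 a))
        + μH[1] (pt 0 '' Icc 0 b) + μH[1] (pt a '' Icc 0 b) :=
        (measure_mono hK.frontier_subset).trans <| (measure_union_le _ _).trans <|
          add_le_add ((measure_union_le _ _).trans (add_le_add (measure_union_le _ _) le_rfl))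
            le_rfl
    _ ≤ ENNReal.ofReal (a + 2 * b) + ENNReal.ofReal (a + 2 * b) + ENNReal.ofReal b
        + ENNReal.ofReal b := by
        rw [hside, hside]; gcongr
    _ = ENNReal.ofReal (2 * a + 6 * b) := by
        have := hK.nonneg
        rw [← ENNReal.ofReal_add (by positivity) (by positivity),
          ← ENNReal.ofReal_add (by positivity) hb, ← ENNReal.ofReal_add (by positivity) hb]
        ring_nf

lemma upperProfile_notMem_interior (hK : IsBoxedConvexBody K a b) :
    pt x (upperProfile K x) ∉ interior K := fun h => by
  obtain ⟨ε, hε, hmem, -⟩ := exists_pt_add_mem_of_mem_interior h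
  linarith [hK.le_upperProfile hmem]

lemma lowerProfile_notMem_interior (hK : IsBoxedConvexBody K a b) :
    pt x (lowerProfile K x) ∉ interior K := fun h => by
  obtain ⟨ε, hε, -, hmem⟩ := exists_pt_add_mem_of_mem_interior h
  linarith [hK.lowerProfile_le hmem]

lemma lowerProfile_lt_upperProfile (hK : IsBoxedConvexBody K a b) (hint : (interior K).Nonempty)
    (hx : x ∈ Ioo 0 a) : lowerProfile K x < upperProfile K x := by
  obtain ⟨z, hz⟩ := hint
  rw [← pt_eta z] at hz
  obtain ⟨ε, hε, habove, hbelow⟩ := exists_pt_add_mem_of_mem_interior hz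
  have hgap : ∀ x ∈ Icc 0 a, 0 ≤ upperProfile K x - lowerProfile K x := fun x hx =>
    sub_nonneg.2 (hK.lowerProfile_le (hK.upperProfile_mem hx))
  have hpos : 0 < (upperProfile K - lowerProfile K) (z 0) := by
    rw [Pi.sub_apply]
    linarith [hK.le_upperProfile habove, hK.lowerProfile_le hbelow]
  exact sub_pos.1 <| (hK.concaveOn_upperProfile.sub hK.convexOn_lowerProfile).pos_of_mem_Ioo
    (hgap 0 ⟨le_rfl, hK.nonneg⟩) (hgap a ⟨hK.nonneg, le_rfl⟩)
    (hK.mem_Icc_of_pt_mem (interior_subset hz)).1 hpos hx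

lemma ofReal_le_hausdorffMeasure_frontier (hK : IsBoxedConvexBody K a b)
    (hint : (interior K).Nonempty) {c d : ℝ} (hc : 0 < c) (hd : d < a) :
    ENNReal.ofReal (2 * (d - c)) ≤ μH[1] (frontier K) := by
  have hcd : Icc c d ⊆ Icc 0 a := Icc_subset_Icc hc.le hd.le
  have htop : graphOver (upperProfile K) (Icc c d) ⊆ frontier K := by
    rintro _ ⟨x, hx, rfl⟩
    exact ⟨subset_closure (hK.upperProfile_mem (hcd hx)), hK.upperProfile_notMem_interior⟩
  have hbot : graphOver (lowerProfile K) (Icc c d) ⊆ frontier K := by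
    rintro _ ⟨x, hx, rfl⟩
    exact ⟨subset_closure (hK.lowerProfile_mem (hcd hx)), hK.lowerProfile_notMem_interior⟩
  have hdisj : Disjoint (graphOver (upperProfile K) (Icc c d))
      (graphOver (lowerProfile K) (Icc c d)) := by
    refine disjoint_left.2 ?_
    rintro _ ⟨x, hx, rfl⟩ ⟨x', -, h⟩
    obtain rfl : x' = x := by simpa using congrArg (· 0) h
    have : lowerProfile K x' = upperProfile K x' := by simpa using congrArg (· 1) h
    exact (hK.lowerProfile_lt_upperProfile hint (Icc_subset_Ioo hc hd hx)).ne this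
  have hmeas : MeasurableSet (graphOver (lowerProfile K) (Icc c d)) :=
    (isCompact_Icc.image_of_continuousOn (continuous_pt.comp_continuousOn (continuousOn_id.prodMk
      (hK.continuousOn_lowerProfile.mono (Icc_subset_Ioo hc hd))))).isClosed.measurableSet
  calc ENNReal.ofReal (2 * (d - c)) ≤ ENNReal.ofReal (d - c) + ENNReal.ofReal (d - c) := by
        rw [two_mul]; exact ENNReal.ofReal_add_le
    _ ≤ μH[1] (graphOver (upperProfile K) (Icc c d))
        + μH[1] (graphOver (lowerProfile K) (Icc c d)) :=
        add_le_add (ofReal_le_hausdorffMeasure_graphOver _ _ _)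
          (ofReal_le_hausdorffMeasure_graphOver _ _ _)
    _ = μH[1] (graphOver (upperProfile K) (Icc c d)
        ∪ graphOver (lowerProfile K) (Icc c d)) := (measure_union hdisj hmeas).symm
    _ ≤ μH[1] (frontier K) := measure_mono (union_subset htop hbot)

end IsBoxedConvexBody

lemma interior_convexHull_nonempty_of_det {S : Set ℝ²} {x y x' y' : ℝ} (h₀ : pt 0 0 ∈ S)
    (h₁ : pt x y ∈ S) (h₂ : pt x' y' ∈ S) (hdet : x * y' - x' * y ≠ 0) :
    (interior (convexHull ℝ S)).Nonempty := by
  rw [interior_convexHull_nonempty_iff_affineSpan_eq_top]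
  have hind : AffineIndependent ℝ ![pt 0 0, pt x y, pt x' y'] := by
    rw [affineIndependent_iff_not_collinear_set, collinear_iff_of_mem (p₀ := pt 0 0) (by simp)]
    rintro ⟨v, hv⟩
    obtain ⟨r, hr⟩ := hv (pt x y) (by simp)
    obtain ⟨r', hr'⟩ := hv (pt x' y') (by simp)
    have e₁ : x = r * v 0 ∧ y = r * v 1 := by
      constructor
      · simpa [pt] using congrArg (· 0) hr
      · simpa [pt] using congrArg (· 1) hr
    have e₂ : x' = r' * v 0 ∧ y' = r' * v 1 := by
      constructor
      · simpa [pt] using congrArg (· 0) hr'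
      · simpa [pt] using congrArg (· 1) hr'
    apply hdet
    rw [e₁.1, e₁.2, e₂.1, e₂.2]
    ring
  have hspan := hind.affineSpan_eq_top_iff_card_eq_finrank_add_one.2 (by simp)
  refine top_unique (hspan ▸ affineSpan_mono ℝ ?_)
  rintro _ ⟨i, rfl⟩
  fin_cases i <;> simpa

section Polygon

variable {u : ℕ → ℝ} {N : ℕ}

lemma pt_mem_polyCurve {i : ℕ} (hi : i ≤ N) (hN : 0 < N) : pt i (u i) ∈ polyCurve u N := by
  simp only [polyCurve, mem_iUnion, Finset.mem_range]
  rcases hi.eq_or_lt with rfl | hlt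
  · refine ⟨i - 1, by omega, ?_⟩
    rw [← Nat.cast_add_one, Nat.sub_add_cancel hN]
    exact right_mem_segment ℝ _ _
  · exact ⟨i, hlt, left_mem_segment ℝ _ _⟩

lemma isCompact_convexHull_polyCurve (hN : 0 < N) : IsCompact (convexHull ℝ (polyCurve u N)) := by
  set V := (fun i : ℕ => pt i (u i)) '' Iic N
  have hV : V ⊆ polyCurve u N := image_subset_iff.2 fun i hi => pt_mem_polyCurve hi hN
  have hcurve : polyCurve u N ⊆ convexHull ℝ V := by
    simp only [polyCurve, iUnion_subset_iff, Finset.mem_range]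
    intro i hi
    refine (convex_convexHull ℝ V).segment_subset (subset_convexHull ℝ V ⟨i, ?_, rfl⟩)
      (subset_convexHull ℝ V ⟨i + 1, ?_, by push_cast; rfl⟩) <;> simp only [mem_Iic] <;> omega
  rw [(convexHull_min hcurve (convex_convexHull ℝ V)).antisymm (convexHull_mono hV)]
  exact ((finite_Iic N).image _).isCompact_convexHull ℝ

variable {h : ℝ}

lemma isBoxedConvexBody_convexHull_polyCurve (hh : 0 ≤ h) (hvals : ∀ n, u n = 0 ∨ u n = h)
    (hu0 : u 0 = 0) (hN : 0 < N) : IsBoxedConvexBody (convexHull ℝ (polyCurve u N)) N h := by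
  set box := (fun p : ℝ² => p 0) ⁻¹' Icc 0 (N : ℝ) ∩ (fun p : ℝ² => p 1) ⁻¹' Icc 0 h
  have hbox : Convex ℝ box :=
    ((convex_Icc _ _).linear_preimage (EuclideanSpace.proj 0 : ℝ² →L[ℝ] ℝ).toLinearMap).inter
      ((convex_Icc _ _).linear_preimage (EuclideanSpace.proj 1 : ℝ² →L[ℝ] ℝ).toLinearMap)
  have hvertex : ∀ i ≤ N, pt i (u i) ∈ box := fun i hi =>
    ⟨⟨i.cast_nonneg, Nat.cast_le.2 hi⟩, by rcases hvals i with hi | hi <;> simp [hi, hh]⟩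
  have hcurve : polyCurve u N ⊆ box := by
    simp only [polyCurve, iUnion_subset_iff, Finset.mem_range]
    intro i hi
    exact hbox.segment_subset (hvertex i hi.le) (by exact_mod_cast hvertex (i + 1) hi)
  have hN' : (0 : ℝ) < N := Nat.cast_pos.2 hN
  refine ⟨convex_convexHull ℝ _, isCompact_convexHull_polyCurve hN,
    fun p hp => convexHull_min hcurve hbox hp, fun x hx => ⟨x / N * u N, ?_⟩, N.cast_nonneg⟩
  have h₀ : pt 0 0 ∈ convexHull ℝ (polyCurve u N) :=
    subset_convexHull ℝ _ (by simpa [hu0] using pt_mem_polyCurve (u := u) (Nat.zero_le N) hN)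
  have hN₀ := subset_convexHull ℝ _ (pt_mem_polyCurve (u := u) le_rfl hN)
  have := (convex_convexHull ℝ _) h₀ hN₀ (sub_nonneg.2 ((div_le_one hN').2 hx.2))
    (div_nonneg hx.1 hN'.le) (sub_add_cancel 1 (x / N))
  rwa [smul_pt_add_smul_pt, mul_zero, zero_add, zero_add, div_mul_cancel₀ x hN'.ne'] at this

lemma interior_convexHull_polyCurve_nonempty (hh : 0 < h) (hvals : ∀ n, u n = 0 ∨ u n = h)
    (hu0 : u 0 = 0) {n : ℕ} (hn : u n = h) (hN : n + 1 ≤ N) :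
    (interior (convexHull ℝ (polyCurve u N))).Nonempty := by
  refine interior_convexHull_nonempty_of_det
    (by simpa [hu0] using pt_mem_polyCurve (u := u) (Nat.zero_le N) (by omega))
    (pt_mem_polyCurve (u := u) (i := n) (by omega) (by omega))
    (pt_mem_polyCurve (u := u) (i := n + 1) hN (by omega)) ?_
  rw [hn]
  push_cast
  rcases hvals (n + 1) with h' | h' <;> rw [h'] <;> nlinarith [n.cast_nonneg (α := ℝ)]

end Polygon

lemma abs_polyDelta_sub_le {u : ℕ → ℝ} {h : ℝ} (hh : 0 < h) (hvals : ∀ n, u n = 0 ∨ u n = h)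
    (hu0 : u 0 = 0) {n N : ℕ} (hn : u n = h) (hN : n + 1 ≤ N) :
    |polyDelta u N - 2 * N| ≤ 4 + 6 * h := by
  have hK := isBoxedConvexBody_convexHull_polyCurve hh.le hvals hu0 (by omega : 0 < N)
  have hint := interior_convexHull_polyCurve_nonempty hh hvals hu0 hn hN
  have hup := hK.hausdorffMeasure_frontier_le
  have hlow := hK.ofReal_le_hausdorffMeasure_frontier hint one_pos (sub_one_lt (N : ℝ))
  have hfin := ne_top_of_le_ne_top ENNReal.ofReal_ne_top hup
  have hδup : polyDelta u N ≤ 2 * N + 6 * h :=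
    ENNReal.toReal_le_of_le_ofReal (by positivity) hup
  have hδlow : 2 * (N - 1 - 1) ≤ polyDelta u N :=
    (ENNReal.ofReal_le_iff_le_toReal hfin).1 hlow
  rw [abs_sub_le_iff]
  constructor <;> linarith

lemma tendsto_div_natCast_of_abs_sub_le {f : ℕ → ℝ} {c C : ℝ}
    (h : ∀ᶠ N in atTop, |f N - c * N| ≤ C) : Tendsto (fun N => f N / N) atTop (nhds c) := by
  rw [tendsto_iff_norm_sub_tendsto_zero]
  refine squeeze_zero' (.of_forall fun _ => norm_nonneg _) ?_
    (tendsto_const_div_atTop_nhds_zero_nat C)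
  filter_upwards [h, eventually_gt_atTop 0] with N hN hpos
  have hN : (0 : ℝ) < N := Nat.cast_pos.2 hpos
  rw [Real.norm_eq_abs, show f N / N - c = (f N - c * N) / N by field_simp, abs_div,
    abs_of_pos hN]
  gcongr

lemma sum_range_eq_sum_blockCount {u : ℕ → ℝ} {V : Finset ℝ} (hV : ∀ n, u n ∈ V)
    (w : ℝ → ℝ → ℝ) (N : ℕ) :
    ∑ i ∈ Finset.range N, w (u i) (u (i + 1))
      = ∑ j ∈ V, ∑ j' ∈ V, (blockCount u N j j' : ℝ) * w j j' := by
  have hsplit : ∀ i, w (u i) (u (i + 1))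
      = ∑ j ∈ V, ∑ j' ∈ V, if u i = j ∧ u (i + 1) = j' then w j j' else 0 := fun i => by
    simp only [ite_and, Finset.sum_ite_irrel, Finset.sum_ite_eq, hV, if_true, Finset.sum_const_zero]
  rw [Finset.sum_congr rfl fun i _ => hsplit i, Finset.sum_comm]
  refine Finset.sum_congr rfl fun j _ => ?_
  rw [Finset.sum_comm]
  refine Finset.sum_congr rfl fun j' _ => ?_
  rw [← Finset.sum_filter, Finset.sum_const, nsmul_eq_mul, blockCount]

section Binary

variable {u : ℕ → ℝ} {h : ℝ}

lemma polyLength_eq_of_binary (hh : h ≠ 0) (hvals : ∀ n, u n = 0 ∨ u n = h) (N : ℕ) :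
    polyLength u N = blockCount u N 0 0 + blockCount u N h h
      + √(1 + h ^ 2) * (blockCount u N 0 h + blockCount u N h 0) := by
  rw [polyLength, sum_range_eq_sum_blockCount (V := {0, h}) (by simpa using hvals)
    (fun j j' => √(1 + (j' - j) ^ 2)) N]
  simp only [Finset.sum_pair hh.symm, sub_self, sub_zero, zero_sub, even_two, Even.neg_pow,
    ne_eq, OfNat.ofNat_ne_zero, not_false_eq_true, zero_pow, add_zero, sqrt_one, mul_one]
  ring

lemma blockCount_add_eq_of_binary (hh : h ≠ 0) (hvals : ∀ n, u n = 0 ∨ u n = h) (N : ℕ) :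
    (blockCount u N 0 0 + blockCount u N h h + blockCount u N 0 h + blockCount u N h 0 : ℝ)
      = N := by
  have := sum_range_eq_sum_blockCount (V := {0, h}) (by simpa using hvals) (fun _ _ => 1) N
  simp only [Finset.sum_pair hh.symm, Finset.sum_const, Finset.card_range, mul_one] at this
  rw [nsmul_one] at this
  linarith

end Binary

lemma tendsto_polyIncon {u : ℕ → ℝ} {L D : ℝ}
    (hℓ : Tendsto (fun N : ℕ => polyLength u N / N) atTop (nhds L))
    (hδ : Tendsto (fun N : ℕ => polyDelta u N / N) atTop (nhds D)) (hD : D ≠ 0) :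
    Tendsto (polyIncon u) atTop (nhds (2 * L / D)) := by
  refine ((hℓ.const_mul 2).div hδ hD).congr' ((eventually_gt_atTop 0).mono fun N hN => ?_)
  rw [Pi.div_apply, polyIncon, mul_div_assoc',
    div_div_div_cancel_right₀ (Nat.cast_ne_zero.2 hN.ne')]

/-- Inconstancy of an infinite `{0,h}`-valued sequence with `u₀ = 0`, not identically
`0`, whose length-2 block frequencies exist: the inconstancy `lim_N ℐ(Γ_N)` exists and
equals `F₀₀ + F_hh + √(1+h²)(F₀h + F_h0) = 1 + (√(1+h²) − 1)(F₀h + F_h0)`. -/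
theorem polyIncon_binary_infinite
    (h : ℝ) (hh : 0 < h) (u : ℕ → ℝ) (hvals : ∀ n, u n = 0 ∨ u n = h)
    (hu0 : u 0 = 0) (hne : ∃ n, u n ≠ 0)
    (F00 Fhh F0h Fh0 : ℝ)
    (hF00 : Tendsto (fun N : ℕ => (blockCount u N 0 0 : ℝ) / N) atTop (nhds F00))
    (hFhh : Tendsto (fun N : ℕ => (blockCount u N h h : ℝ) / N) atTop (nhds Fhh))
    (hF0h : Tendsto (fun N : ℕ => (blockCount u N 0 h : ℝ) / N) atTop (nhds F0h))
    (hFh0 : Tendsto (fun N : ℕ => (blockCount u N h 0 : ℝ) / N) atTop (nhds Fh0)) :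
    Tendsto (fun N : ℕ => polyIncon u N) atTop
      (nhds (F00 + Fhh + Real.sqrt (1 + h ^ 2) * (F0h + Fh0))) ∧
    F00 + Fhh + Real.sqrt (1 + h ^ 2) * (F0h + Fh0)
      = 1 + (Real.sqrt (1 + h ^ 2) - 1) * (F0h + Fh0) := by
  obtain ⟨n, hn⟩ : ∃ n, u n = h := hne.imp fun n hn => (hvals n).resolve_left hn
  have hδ : Tendsto (fun N : ℕ => polyDelta u N / N) atTop (nhds 2) :=
    tendsto_div_natCast_of_abs_sub_le <| (eventually_ge_atTop (n + 1)).mono fun N hN =>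
      abs_polyDelta_sub_le hh hvals hu0 hn hN
  have hℓ : Tendsto (fun N : ℕ => polyLength u N / N) atTop
      (nhds (F00 + Fhh + √(1 + h ^ 2) * (F0h + Fh0))) :=
    ((hF00.add hFhh).add ((hF0h.add hFh0).const_mul _)).congr fun N => by
      rw [polyLength_eq_of_binary hh.ne' hvals]; ring
  have hsum : F00 + Fhh + F0h + Fh0 = 1 := by
    refine tendsto_nhds_unique (((hF00.add hFhh).add hF0h).add hFh0) (tendsto_const_nhds.congr'
      ((eventually_gt_atTop 0).mono fun N hN => ?_))
    dsimp only
    rw [← add_div, ← add_div, ← add_div, blockCount_add_eq_of_binary hh.ne' hvals,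
      div_self (Nat.cast_ne_zero.2 hN.ne')]
  exact ⟨by simpa using tendsto_polyIncon hℓ hδ two_ne_zero, by linear_combination hsum⟩
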